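/- Let n ≥ max(2m,3) with m ≥ 1, and let M ∈ Mₙ(ℂ) satisfy det M = 1 and Mᵀ H M̄ = H. Then the following are equivalent: (i) M_{i1} = 0 for all i = 2,…,n (i.e., M lies in the parabolic subgroup P¹ of SLₙ(ℂ) of matrices whose first column has zeros below the first entry); (ii) M_{nj} = 0 for all j = 1,…,n−1 (i.e., M lies in the parabolic subgroup P² of matrices whose last row has zeros before the last entry); (iii) M has the block form with first row (μ, −μ x̄ᵀH′A, c), middle block rows (0, A, x), last row (0, 0, 1/μ̄), for some μ, c ∈ ℂ with μ ≠ 0, x ∈ ℂ^{n−2}, and A with Aᵀ H′ Ā = H′ and 2 Re(c/μ) + xᵀ H′ x̄ = 0. In other words, P¹ ∩ SU(H) = P² ∩ SU(H) = S₁, where S₁ is the set of matrices of the stated block form with determinant 1. -/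

import Mathlib

/- The standard Hermitian matrix of signature (n-m, m) in the anti-diagonal
block form (formformaminus) of the paper; for the parameters (n-2, m-1) it is
the central block H′ of Hmat n m. -/
def Hmat (n m : ℕ) : Matrix (Fin n) (Fin n) ℂ := fun i j =>
  if i.1 + j.1 + 1 = n ∧ (i.1 < m ∨ n ≤ i.1 + m) then 1
  else if i = j ∧ m ≤ i.1 ∧ i.1 + m < n then 1 else 0

/-- The matrix of block form (formalgebra): first row (μ, −μ x̄ᵀH′A, c),
middle rows (0, A, x), last row (0, 0, 1/μ̄). -/
noncomputable def mkS (n m : ℕ) (μ c : ℂ) (x : Fin (n - 2) → ℂ)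
    (A : Matrix (Fin (n - 2)) (Fin (n - 2)) ℂ) : Matrix (Fin n) (Fin n) ℂ :=
  fun i j =>
    if hi0 : i.1 = 0 then
      if hj0 : j.1 = 0 then μ
      else if hjn : j.1 = n - 1 then c
      else -μ * ∑ k, ∑ l, (starRingEnd ℂ) (x k) * Hmat (n - 2) (m - 1) k l *
        A l ⟨j.1 - 1, by have := j.isLt; omega⟩
    else if hin : i.1 = n - 1 then
      (if j.1 = n - 1 then 1 / (starRingEnd ℂ) μ else 0)
    else
      if hj0 : j.1 = 0 then 0
      else if hjn : j.1 = n - 1 then x ⟨i.1 - 1, by have := i.isLt; omega⟩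
      else A ⟨i.1 - 1, by have := i.isLt; omega⟩ ⟨j.1 - 1, by have := j.isLt; omega⟩

/-!
`Hmat n m` is the permutation matrix of an involution swapping the first and the last index and
mapping the middle indices to themselves as `Hmat (n - 2) (m - 1)` does. Hence the form splits as
`⟨u, v⟩ = u₁ v̄ₙ + ⟨u', v'⟩' + uₙ v̄₁`, where `u', v'` are the middle coordinates. The relation
`MᵀHM̄ = H` says `⟨colᵢ M, colⱼ M⟩ = H i j`, and since `H² = 1` also `⟨rowᵢ M, rowⱼ M⟩ = H i j`.
If the first column is `μ e₁`, then `μ · conj (M n j) = H 1 j`, which forces the last row to be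
`(0, …, 0, 1/μ̄)`; the same argument with rows gives the converse. The remaining blocks are then
read off from `⟨colᵢ M, colⱼ M⟩ = H i j` for `i, j` among the middle and last indices.
-/

open ComplexConjugate Matrix

def Fin.inner {n : ℕ} (k : Fin (n - 2)) : Fin n := ⟨k.1 + 1, by omega⟩

theorem Fin.sum_univ_eq_first_add_inner_add_last {M : Type*} [AddCommMonoid M] {n : ℕ}
    (hn : 2 ≤ n) (f : Fin n → M) :
    ∑ k, f k = f ⟨0, by omega⟩ + ∑ k : Fin (n - 2), f k.inner + f ⟨n - 1, by omega⟩ := by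
  obtain ⟨p, rfl⟩ : ∃ p, n = p + 2 := ⟨n - 2, by omega⟩
  rw [Fin.sum_univ_succ, Fin.sum_univ_castSucc, ← add_assoc]
  rfl

/-- The form `⟨z, w⟩ = zᵀ H w̄` of the paper. -/
def Matrix.hermForm {ι : Type*} [Fintype ι] (H : Matrix ι ι ℂ) (u v : ι → ℂ) : ℂ :=
  u ⬝ᵥ (H *ᵥ star v)

/-- `M ∈ U(H)`, i.e. `⟨Mz, Mw⟩ = ⟨z, w⟩` for all `z, w`. -/
def Matrix.PreservesForm {ι : Type*} [Fintype ι] (H M : Matrix ι ι ℂ) : Prop :=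
  Mᵀ * H * M.map (starRingEnd ℂ) = H

theorem Matrix.mul_mul_conjTranspose_apply {ι : Type*} [Fintype ι]
    (A H B : Matrix ι ι ℂ) (i j : ι) : (A * H * Bᴴ) i j = hermForm H (A i) (B j) := by
  rw [Matrix.mul_assoc, mul_apply']
  rfl

theorem Matrix.mul_mul_eq_of_mul_mul_eq {ι R : Type*} [Fintype ι] [DecidableEq ι] [CommRing R]
    {A B H : Matrix ι ι R} (hH : H * H = 1) (h : B * H * A = H) : A * H * B = H := by
  have hinv : (H * B * H) * A = 1 := by
    rw [Matrix.mul_assoc, Matrix.mul_assoc, ← Matrix.mul_assoc B, h, hH]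
  calc A * H * B = A * (H * B * H) * H := by simp only [Matrix.mul_assoc, hH, Matrix.mul_one]
    _ = H := by rw [mul_eq_one_comm.mp hinv, Matrix.one_mul]

namespace Hmat

def perm (n m : ℕ) : Equiv.Perm (Fin n) :=
  Function.Involutive.toPerm
    (fun i => ⟨if i.1 < m ∨ n ≤ i.1 + m then n - 1 - i.1 else i.1, by split <;> omega⟩)
    (fun i => by ext; dsimp only; split_ifs <;> omega)

theorem perm_val (n m : ℕ) (i : Fin n) :
    (perm n m i).1 = if i.1 < m ∨ n ≤ i.1 + m then n - 1 - i.1 else i.1 :=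
  rfl

theorem perm_symm (n m : ℕ) : (perm n m).symm = perm n m :=
  Function.Involutive.toPerm_symm _

theorem perm_mul_self (n m : ℕ) : perm n m * perm n m = 1 :=
  Equiv.ext (Function.Involutive.toPerm_involutive _)

theorem eq_permMatrix (n m : ℕ) : Hmat n m = (perm n m).permMatrix ℂ := by
  ext i j
  have := i.isLt
  simp only [Hmat, Equiv.Perm.permMatrix, PEquiv.toMatrix_apply, Equiv.toPEquiv_apply,
    Option.mem_def, Option.some_inj, Fin.ext_iff, perm_val]
  split_ifs <;> first | rfl | (exfalso; omega)

theorem apply_eq (n m : ℕ) (i j : Fin n) : Hmat n m i j = if perm n m i = j then 1 else 0 := by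
  simp only [eq_permMatrix, Equiv.Perm.permMatrix, PEquiv.toMatrix_apply, Equiv.toPEquiv_apply,
    Option.mem_def, Option.some_inj]

theorem mul_self (n m : ℕ) : Hmat n m * Hmat n m = 1 := by
  rw [eq_permMatrix]
  exact (permMatrix_mul (perm n m) (perm n m)).symm.trans (by rw [perm_mul_self, permMatrix_one])

theorem transpose_eq (n m : ℕ) : (Hmat n m)ᵀ = Hmat n m := by
  rw [eq_permMatrix, transpose_permMatrix, Equiv.Perm.inv_def, perm_symm]

theorem mulVec_eq (n m : ℕ) (w : Fin n → ℂ) : Hmat n m *ᵥ w = w ∘ perm n m := by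
  rw [eq_permMatrix, permMatrix_mulVec]

variable {n m : ℕ}

theorem perm_first (hm : 1 ≤ m) (hn : 2 ≤ n) : perm n m ⟨0, by omega⟩ = ⟨n - 1, by omega⟩ := by
  rw [Fin.ext_iff, perm_val]; dsimp only; split_ifs <;> omega

theorem perm_last (hm : 1 ≤ m) (hn : 2 ≤ n) : perm n m ⟨n - 1, by omega⟩ = ⟨0, by omega⟩ := by
  rw [Fin.ext_iff, perm_val]; dsimp only; split_ifs <;> omega

theorem perm_inner (k : Fin (n - 2)) : perm n m k.inner = (perm (n - 2) (m - 1) k).inner := by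
  ext; simp only [perm_val, Fin.inner]; split_ifs <;> omega

theorem apply_first (hm : 1 ≤ m) (hn : 2 ≤ n) (j : Fin n) :
    Hmat n m ⟨0, by omega⟩ j = if ⟨n - 1, by omega⟩ = j then 1 else 0 := by
  rw [apply_eq, perm_first hm hn]

theorem apply_last (hm : 1 ≤ m) (hn : 2 ≤ n) (i : Fin n) :
    Hmat n m i ⟨n - 1, by omega⟩ = if ⟨0, by omega⟩ = i then 1 else 0 := by
  rw [← transpose_eq n m, transpose_apply, apply_eq, perm_last hm hn]

theorem apply_inner (k l : Fin (n - 2)) : Hmat n m k.inner l.inner = Hmat (n - 2) (m - 1) k l := by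
  rw [apply_eq, apply_eq, perm_inner]
  simp only [Fin.inner, Fin.mk.injEq, add_left_inj, Fin.val_inj]

theorem hermForm_eq (hm : 1 ≤ m) (hn : 2 ≤ n) (u v : Fin n → ℂ) :
    hermForm (Hmat n m) u v = u ⟨0, by omega⟩ * conj (v ⟨n - 1, by omega⟩)
      + hermForm (Hmat (n - 2) (m - 1)) (u ∘ Fin.inner) (v ∘ Fin.inner)
      + u ⟨n - 1, by omega⟩ * conj (v ⟨0, by omega⟩) := by
  simp only [hermForm, mulVec_eq, dotProduct]
  rw [Fin.sum_univ_eq_first_add_inner_add_last hn]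
  simp [perm_first hm hn, perm_last hm hn, perm_inner]

end Hmat

theorem Matrix.hermForm_eq_sum_of_transpose_eq {ι : Type*} [Fintype ι] {H : Matrix ι ι ℂ}
    (hH : Hᵀ = H) (u v : ι → ℂ) : hermForm H u v = ∑ k, ∑ l, conj (v k) * H k l * u l := by
  conv_lhs => rw [← hH]
  simp only [hermForm, dotProduct, mulVec, transpose_apply, Finset.mul_sum]
  rw [Finset.sum_comm]
  exact Finset.sum_congr rfl fun k _ => Finset.sum_congr rfl fun l _ => by
    rw [Pi.star_apply, Complex.star_def]; ring

namespace Matrix.PreservesForm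

variable {ι : Type*} [Fintype ι] {H M : Matrix ι ι ℂ}

theorem hermForm_col (hM : PreservesForm H M) (i j : ι) : hermForm H (Mᵀ i) (Mᵀ j) = H i j := by
  rw [← mul_mul_conjTranspose_apply, transpose_conjTranspose]
  exact congrFun (congrFun hM i) j

theorem hermForm_row [DecidableEq ι] (hH : H * H = 1) (hHt : Hᵀ = H) (hM : PreservesForm H M)
    (i j : ι) : hermForm H (M i) (M j) = H i j := by
  have h : Mᴴ * H * M = H := by
    have := congrArg transpose (show Mᵀ * H * M.map (starRingEnd ℂ) = H from hM)
    rwa [transpose_mul, transpose_mul, transpose_transpose, hHt, ← Matrix.mul_assoc] at this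
  rw [← mul_mul_conjTranspose_apply, mul_mul_eq_of_mul_mul_eq hH h]

end Matrix.PreservesForm

section

variable {n m : ℕ} {M : Matrix (Fin n) (Fin n) ℂ}

theorem mul_conj_lastRow_eq_of_firstCol_eq_zero (hm : 1 ≤ m) (hn : 2 ≤ n)
    (hM : PreservesForm (Hmat n m) M) (hP1 : ∀ i : Fin n, i.1 ≠ 0 → M i ⟨0, by omega⟩ = 0)
    (j : Fin n) :
    M ⟨0, by omega⟩ ⟨0, by omega⟩ * conj (M ⟨n - 1, by omega⟩ j) = Hmat n m ⟨0, by omega⟩ j := by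
  have hmid : Mᵀ ⟨0, by omega⟩ ∘ Fin.inner = 0 := funext fun k => hP1 k.inner (Nat.succ_ne_zero k.1)
  rw [← hM.hermForm_col, Hmat.hermForm_eq hm hn, hmid]
  simp [hermForm, hP1 ⟨n - 1, by omega⟩ (show n - 1 ≠ 0 by omega)]

theorem mul_conj_corner_eq_of_lastRow_eq_zero (hm : 1 ≤ m) (hn : 2 ≤ n)
    (hM : PreservesForm (Hmat n m) M) (hP2 : ∀ j : Fin n, j.1 ≠ n - 1 → M ⟨n - 1, by omega⟩ j = 0)
    (i : Fin n) :
    M i ⟨0, by omega⟩ * conj (M ⟨n - 1, by omega⟩ ⟨n - 1, by omega⟩)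
      = Hmat n m i ⟨n - 1, by omega⟩ := by
  have hmid : M ⟨n - 1, by omega⟩ ∘ Fin.inner = 0 :=
    funext fun k => hP2 k.inner (by simp only [Fin.inner]; omega)
  rw [← hM.hermForm_row (Hmat.mul_self n m) (Hmat.transpose_eq n m), Hmat.hermForm_eq hm hn, hmid]
  simp [hermForm, hP2 ⟨0, by omega⟩ (show 0 ≠ n - 1 by omega)]

theorem firstCol_eq_zero_iff_lastRow_eq_zero (hm : 1 ≤ m) (hn : 2 ≤ n)
    (hM : PreservesForm (Hmat n m) M) :
    (∀ i : Fin n, i.1 ≠ 0 → M i ⟨0, by omega⟩ = 0) ↔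
      (∀ j : Fin n, j.1 ≠ n - 1 → M ⟨n - 1, by omega⟩ j = 0) := by
  constructor
  · intro hP1 j hj
    have h := mul_conj_lastRow_eq_of_firstCol_eq_zero hm hn hM hP1
    have hμ : M ⟨0, by omega⟩ ⟨0, by omega⟩ ≠ 0 :=
      left_ne_zero_of_mul_eq_one (by simpa [Hmat.apply_first hm hn] using h ⟨n - 1, by omega⟩)
    simpa [Hmat.apply_first hm hn, hμ, Fin.ext_iff, Ne.symm hj] using h j
  · intro hP2 i hi
    have h := mul_conj_corner_eq_of_lastRow_eq_zero hm hn hM hP2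
    have hν : conj (M ⟨n - 1, by omega⟩ ⟨n - 1, by omega⟩) ≠ 0 :=
      right_ne_zero_of_mul_eq_one (by simpa [Hmat.apply_last hm hn] using h ⟨0, by omega⟩)
    simpa [Hmat.apply_last hm hn, hν, Fin.ext_iff, Ne.symm hi] using h i

theorem hermForm_col_split (hm : 1 ≤ m) (hn : 2 ≤ n) (hM : PreservesForm (Hmat n m) M)
    (i j : Fin n) :
    M ⟨0, by omega⟩ i * conj (M ⟨n - 1, by omega⟩ j)
      + hermForm (Hmat (n - 2) (m - 1)) (Mᵀ i ∘ Fin.inner) (Mᵀ j ∘ Fin.inner)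
      + M ⟨n - 1, by omega⟩ i * conj (M ⟨0, by omega⟩ j) = Hmat n m i j := by
  rw [← hM.hermForm_col, Hmat.hermForm_eq hm hn]
  rfl

theorem preservesForm_submatrix_inner (hm : 1 ≤ m) (hn : 2 ≤ n) (hM : PreservesForm (Hmat n m) M)
    (hP2 : ∀ j : Fin n, j.1 ≠ n - 1 → M ⟨n - 1, by omega⟩ j = 0) :
    PreservesForm (Hmat (n - 2) (m - 1)) (M.submatrix Fin.inner Fin.inner) := by
  have hlast (k : Fin (n - 2)) : M ⟨n - 1, by omega⟩ k.inner = 0 :=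
    hP2 k.inner (by simp only [Fin.inner]; omega)
  show (M.submatrix Fin.inner Fin.inner)ᵀ * _ * (M.submatrix Fin.inner Fin.inner)ᵀᴴ = _
  ext i j
  rw [mul_mul_conjTranspose_apply, ← Hmat.apply_inner,
    ← hermForm_col_split hm hn hM, hlast, hlast]
  simp only [map_zero, mul_zero, zero_mul, zero_add, add_zero]
  rfl

theorem two_mul_re_div_add_re_hermForm_eq_zero (hm : 1 ≤ m) (hn : 2 ≤ n)
    (hM : PreservesForm (Hmat n m) M)
    (hcorner : M ⟨0, by omega⟩ ⟨0, by omega⟩ * conj (M ⟨n - 1, by omega⟩ ⟨n - 1, by omega⟩) = 1) :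
    2 * (M ⟨0, by omega⟩ ⟨n - 1, by omega⟩ / M ⟨0, by omega⟩ ⟨0, by omega⟩).re
      + (hermForm (Hmat (n - 2) (m - 1)) (Mᵀ ⟨n - 1, by omega⟩ ∘ Fin.inner)
          (Mᵀ ⟨n - 1, by omega⟩ ∘ Fin.inner)).re = 0 := by
  have h := hermForm_col_split hm hn hM ⟨n - 1, by omega⟩ ⟨n - 1, by omega⟩
  rw [Hmat.apply_last hm hn, if_neg (by simp only [Fin.mk.injEq]; omega)] at h
  set μ := M ⟨0, by omega⟩ ⟨0, by omega⟩
  set c := M ⟨0, by omega⟩ ⟨n - 1, by omega⟩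
  set ν := M ⟨n - 1, by omega⟩ ⟨n - 1, by omega⟩
  have hν : conj ν = μ⁻¹ := eq_inv_of_mul_eq_one_right hcorner
  have hc : c * conj ν = c / μ := by rw [hν, div_eq_mul_inv]
  have hc' : ν * conj c = conj (c / μ) := by rw [← hc, map_mul, Complex.conj_conj, mul_comm]
  rw [hc, hc'] at h
  have := congrArg Complex.re h
  simp only [Complex.add_re, Complex.conj_re, Complex.zero_re] at this
  linarith

theorem firstRow_inner_eq (hm : 1 ≤ m) (hn : 2 ≤ n) (hM : PreservesForm (Hmat n m) M)
    (hP2 : ∀ j : Fin n, j.1 ≠ n - 1 → M ⟨n - 1, by omega⟩ j = 0)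
    (hcorner : M ⟨0, by omega⟩ ⟨0, by omega⟩ * conj (M ⟨n - 1, by omega⟩ ⟨n - 1, by omega⟩) = 1)
    (j : Fin (n - 2)) :
    M ⟨0, by omega⟩ j.inner = -M ⟨0, by omega⟩ ⟨0, by omega⟩ *
      ∑ k, ∑ l, conj (M k.inner ⟨n - 1, by omega⟩) * Hmat (n - 2) (m - 1) k l *
        M l.inner j.inner := by
  have h := hermForm_col_split hm hn hM j.inner ⟨n - 1, by omega⟩
  rw [Hmat.apply_last hm hn, if_neg (by simp only [Fin.ext_iff, Fin.inner]; omega),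
    hP2 j.inner (by simp only [Fin.inner]; omega),
    hermForm_eq_sum_of_transpose_eq (Hmat.transpose_eq _ _)] at h
  simp only [Function.comp_apply, transpose_apply] at h
  linear_combination M ⟨0, by omega⟩ ⟨0, by omega⟩ * h - M ⟨0, by omega⟩ j.inner * hcorner

theorem eq_mkS (hn : 2 ≤ n)
    (hP1 : ∀ i : Fin n, i.1 ≠ 0 → M i ⟨0, by omega⟩ = 0)
    (hP2 : ∀ j : Fin n, j.1 ≠ n - 1 → M ⟨n - 1, by omega⟩ j = 0)
    (hcorner : M ⟨0, by omega⟩ ⟨0, by omega⟩ * conj (M ⟨n - 1, by omega⟩ ⟨n - 1, by omega⟩) = 1)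
    (hfirst : ∀ j : Fin (n - 2), M ⟨0, by omega⟩ j.inner = -M ⟨0, by omega⟩ ⟨0, by omega⟩ *
      ∑ k, ∑ l, conj (M k.inner ⟨n - 1, by omega⟩) * Hmat (n - 2) (m - 1) k l * M l.inner j.inner) :
    M = mkS n m (M ⟨0, by omega⟩ ⟨0, by omega⟩) (M ⟨0, by omega⟩ ⟨n - 1, by omega⟩)
      (Mᵀ ⟨n - 1, by omega⟩ ∘ Fin.inner) (M.submatrix Fin.inner Fin.inner) := by
  have hν : M ⟨n - 1, by omega⟩ ⟨n - 1, by omega⟩ = 1 / conj (M ⟨0, by omega⟩ ⟨0, by omega⟩) := by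
    rw [← Complex.conj_conj (M _ _), eq_one_div_of_mul_eq_one_right hcorner, map_div₀, map_one]
  ext ⟨i, hi⟩ ⟨j, hj⟩
  unfold mkS
  dsimp only
  split_ifs
  · subst_vars; rfl
  · subst_vars; rfl
  · obtain ⟨j, rfl⟩ : ∃ j', j = j' + 1 := ⟨j - 1, by omega⟩
    subst_vars
    exact hfirst ⟨j, by omega⟩
  · subst_vars; exact hν
  · subst_vars; exact hP2 _ ‹_›
  · subst_vars; exact hP1 _ ‹_›
  · subst_vars
    obtain ⟨i, rfl⟩ : ∃ i', i = i' + 1 := ⟨i - 1, by omega⟩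
    rfl
  · obtain ⟨i, rfl⟩ : ∃ i', i = i' + 1 := ⟨i - 1, by omega⟩
    obtain ⟨j, rfl⟩ : ∃ j', j = j' + 1 := ⟨j - 1, by omega⟩
    rfl

theorem exists_mkS_of_firstCol_eq_zero (hm : 1 ≤ m) (hn : 2 ≤ n) (hM : PreservesForm (Hmat n m) M)
    (hP1 : ∀ i : Fin n, i.1 ≠ 0 → M i ⟨0, by omega⟩ = 0) :
    ∃ (μ c : ℂ) (x : Fin (n - 2) → ℂ) (A : Matrix (Fin (n - 2)) (Fin (n - 2)) ℂ),
      μ ≠ 0 ∧ PreservesForm (Hmat (n - 2) (m - 1)) A ∧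
      2 * (c / μ).re + (hermForm (Hmat (n - 2) (m - 1)) x x).re = 0 ∧ M = mkS n m μ c x A := by
  have hP2 := (firstCol_eq_zero_iff_lastRow_eq_zero hm hn hM).1 hP1
  have hcorner :
      M ⟨0, by omega⟩ ⟨0, by omega⟩ * conj (M ⟨n - 1, by omega⟩ ⟨n - 1, by omega⟩) = 1 := by
    simpa [Hmat.apply_first hm hn] using
      mul_conj_lastRow_eq_of_firstCol_eq_zero hm hn hM hP1 ⟨n - 1, by omega⟩
  exact ⟨_, _, _, _, left_ne_zero_of_mul_eq_one hcorner,
    preservesForm_submatrix_inner hm hn hM hP2,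
    two_mul_re_div_add_re_hermForm_eq_zero hm hn hM hcorner,
    eq_mkS hn hP1 hP2 hcorner (firstRow_inner_eq hm hn hM hP2 hcorner)⟩

end

theorem mkS_firstCol_eq_zero {n m : ℕ} (hn : 0 < n) (μ c : ℂ) (x : Fin (n - 2) → ℂ)
    (A : Matrix (Fin (n - 2)) (Fin (n - 2)) ℂ) (i : Fin n) (hi : i.1 ≠ 0) :
    mkS n m μ c x A i ⟨0, hn⟩ = 0 := by
  unfold mkS
  rw [dif_neg hi]
  dsimp only
  split_ifs <;> first | rfl | (exfalso; omega)

/-- For M ∈ SU(H), lying in the parabolic subgroup P¹ (zero first column below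
the corner), lying in P² (zero last row before the corner), and having the
block form (formalgebra) are all equivalent; i.e. P¹ ∩ SU(H) = P² ∩ SU(H) = S₁. -/
theorem stmt3 (n m : ℕ) (hm : 1 ≤ m) (hn : 3 ≤ n)
    (M : Matrix (Fin n) (Fin n) ℂ)
    (hM : M.transpose * Hmat n m * M.map (starRingEnd ℂ) = Hmat n m) :
    ((∀ i : Fin n, i.1 ≠ 0 → M i ⟨0, by omega⟩ = 0) ↔
      (∀ j : Fin n, j.1 ≠ n - 1 → M ⟨n - 1, by omega⟩ j = 0)) ∧
    ((∀ i : Fin n, i.1 ≠ 0 → M i ⟨0, by omega⟩ = 0) ↔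
      (∃ (μ c : ℂ) (x : Fin (n - 2) → ℂ) (A : Matrix (Fin (n - 2)) (Fin (n - 2)) ℂ),
        μ ≠ 0 ∧
        A.transpose * Hmat (n - 2) (m - 1) * A.map (starRingEnd ℂ) = Hmat (n - 2) (m - 1) ∧
        2 * (c / μ).re + (dotProduct x ((Hmat (n - 2) (m - 1)).mulVec (star x))).re = 0 ∧
        M = mkS n m μ c x A)) := by
  have hn' : 2 ≤ n := by omega
  refine ⟨firstCol_eq_zero_iff_lastRow_eq_zero hm hn' hM,
    exists_mkS_of_firstCol_eq_zero hm hn' hM, ?_⟩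
  rintro ⟨μ, c, x, A, -, -, -, rfl⟩ i hi
  exact mkS_firstCol_eq_zero _ μ c x A i hi
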